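/- arXiv:1306.6909 — 3 statements merged into one kernel-verified Lean document; each statement's English description precedes it below -/
import Mathlib

section
/- If m = Σ_{i=1}^N a_i δ_{x_i} is a discrete measure with nonzero amplitudes a_i and distinct points x_i, then the subdifferential of the total variation at m equals { η ∈ C(T) : ‖η‖_∞ ≤ 1 and η(x_i) = sign(a_i) for all i }. -/
/-!
As for any norm, `η` is a subgradient of `tv` at `m` iff `η` lies in the dual unit ball and
`∫ η dm = tv m`: test the subgradient inequality at `m' = 0` and at `m' = m + μ`, and use the
Dirac masses `±δ_y` to bound `|η y|`. For `m = ∑ aᵢ δ_{xᵢ}` one has `∫ η dm = ∑ aᵢ η(xᵢ)` and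
`tv m = ∑ |aᵢ|`, the supremum being attained by a Tietze extension of `xᵢ ↦ sign aᵢ`. Since each
`aᵢ η(xᵢ) ≤ |aᵢ|`, equality of the sums forces `η(xᵢ) = sign aᵢ` for every `i`.
-/

open MeasureTheory

instance fact_zero_lt_one_real : Fact ((0 : ℝ) < 1) := ⟨zero_lt_one⟩

noncomputable section

/-- The torus `T = ℝ/ℤ`. -/
abbrev 𝕋 := AddCircle (1 : ℝ)

/-- Integral `∫ f dm` of a function against a (finite) signed Radon measure on the torus. -/
def sInt (m : SignedMeasure 𝕋) (f : 𝕋 → ℝ) : ℝ :=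
  ∫ x, f x ∂m.toJordanDecomposition.posPart - ∫ x, f x ∂m.toJordanDecomposition.negPart

/-- The total variation norm `‖m‖_TV = sup { ∫ ψ dm : ψ ∈ C(𝕋), ‖ψ‖_∞ ≤ 1 }`. -/
def tv (m : SignedMeasure 𝕋) : ℝ :=
  sSup { r | ∃ ψ : C(𝕋, ℝ), ‖ψ‖ ≤ 1 ∧ r = sInt m ψ }

/-- The subdifferential of the total variation norm at `m`. -/
def subdiffTV (m : SignedMeasure 𝕋) : Set C(𝕋, ℝ) :=
  { η | ∀ m' : SignedMeasure 𝕋, tv m' ≥ tv m + sInt (m' - m) η }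

/-- The Dirac mass at a point, as a signed measure. -/
def mdirac (x : 𝕋) : SignedMeasure 𝕋 := (Measure.dirac x).toSignedMeasure

theorem ContinuousMap.integrable_of_compactSpace {X E : Type*} [TopologicalSpace X]
    [CompactSpace X] [MeasurableSpace X] [OpensMeasurableSpace X] [NormedAddCommGroup E]
    (f : C(X, E)) (μ : Measure X) [IsFiniteMeasure μ] : Integrable f μ :=
  f.continuous.integrable_of_hasCompactSupport (HasCompactSupport.of_compactSpace f)

theorem ContinuousMap.exists_norm_le_one_interpolating {X ι : Type*} [TopologicalSpace X]
    [CompactSpace X] [T2Space X] [Finite ι] {x : ι → X} (hx : Function.Injective x)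
    {v : ι → ℝ} (hv : ∀ i, |v i| ≤ 1) : ∃ ψ : C(X, ℝ), ‖ψ‖ ≤ 1 ∧ ∀ i, ψ (x i) = v i := by
  let _ : TopologicalSpace ι := ⊥
  have : DiscreteTopology ι := ⟨rfl⟩
  have he : Topology.IsClosedEmbedding x := (continuous_of_discreteTopology).isClosedEmbedding hx
  obtain ⟨ψ, hψ, hψx⟩ := ContinuousMap.exists_extension_forall_mem he
    ⟨v, continuous_of_discreteTopology⟩ (t := Metric.closedBall (0 : ℝ) 1)
    (fun i => by simpa using hv i)
  refine ⟨ψ, (ψ.norm_le zero_le_one).2 fun y => by simpa using hψ y, fun i => ?_⟩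
  exact congr($hψx i)

theorem Real.mul_eq_abs_iff_eq_sign {a b : ℝ} (ha : a ≠ 0) : a * b = |a| ↔ b = Real.sign a := by
  rcases ha.lt_or_gt with h | h
  · rw [Real.sign_of_neg h, abs_of_neg h, ← mul_neg_one a, mul_right_inj' ha]
  · rw [Real.sign_of_pos h, abs_of_pos h, mul_eq_left₀ ha]

theorem mul_le_abs_of_abs_le_one {a b : ℝ} (hb : |b| ≤ 1) : a * b ≤ |a| :=
  calc a * b ≤ |a| * |b| := (le_abs_self _).trans (abs_mul _ _).le
    _ ≤ |a| := mul_le_of_le_one_right (abs_nonneg _) hb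

theorem ContinuousMap.abs_apply_le_of_norm_le_one {X : Type*} [TopologicalSpace X]
    [CompactSpace X] {ψ : C(X, ℝ)} (hψ : ‖ψ‖ ≤ 1) (y : X) : |ψ y| ≤ 1 :=
  (ψ.norm_le zero_le_one).1 hψ y

theorem Finset.sum_mul_eq_sum_abs_iff {ι : Type*} (s : Finset ι) {a b : ι → ℝ}
    (ha : ∀ i ∈ s, a i ≠ 0) (hb : ∀ i ∈ s, |b i| ≤ 1) :
    ∑ i ∈ s, a i * b i = ∑ i ∈ s, |a i| ↔ ∀ i ∈ s, b i = Real.sign (a i) := by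
  rw [Finset.sum_eq_sum_iff_of_le fun i hi => mul_le_abs_of_abs_le_one (hb i hi)]
  exact forall₂_congr fun i hi => Real.mul_eq_abs_iff_eq_sign (ha i hi)

theorem sInt_eq_integral_sub_integral {m : SignedMeasure 𝕋} {P Q : Measure 𝕋}
    [IsFiniteMeasure P] [IsFiniteMeasure Q] (h : m = P.toSignedMeasure - Q.toSignedMeasure)
    (f : C(𝕋, ℝ)) : sInt m f = ∫ x, f x ∂P - ∫ x, f x ∂Q := by
  set μ := m.toJordanDecomposition.posPart
  set ν := m.toJordanDecomposition.negPart
  have hsub : μ.toSignedMeasure - ν.toSignedMeasure = P.toSignedMeasure - Q.toSignedMeasure :=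
    (SignedMeasure.toSignedMeasure_toJordanDecomposition m).trans h
  have hadd : μ + Q = P + ν := by
    rw [← Measure.toSignedMeasure_eq_toSignedMeasure_iff, Measure.toSignedMeasure_add,
      Measure.toSignedMeasure_add, ← sub_eq_sub_iff_add_eq_add, hsub]
  have hint : ∫ x, f x ∂μ + ∫ x, f x ∂Q = ∫ x, f x ∂P + ∫ x, f x ∂ν := by
    simp only [← integral_add_measure (f.integrable_of_compactSpace _)
      (f.integrable_of_compactSpace _), hadd]
  rw [sInt]
  linarith

theorem sInt_add (m₁ m₂ : SignedMeasure 𝕋) (f : C(𝕋, ℝ)) :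
    sInt (m₁ + m₂) f = sInt m₁ f + sInt m₂ f := by
  set j₁ := m₁.toJordanDecomposition
  set j₂ := m₂.toJordanDecomposition
  have h : m₁ + m₂ = (j₁.posPart + j₂.posPart).toSignedMeasure
      - (j₁.negPart + j₂.negPart).toSignedMeasure := by
    rw [Measure.toSignedMeasure_add, Measure.toSignedMeasure_add]
    conv_lhs => rw [← SignedMeasure.toSignedMeasure_toJordanDecomposition m₁,
      ← SignedMeasure.toSignedMeasure_toJordanDecomposition m₂]
    simp only [JordanDecomposition.toSignedMeasure]
    abel
  rw [sInt_eq_integral_sub_integral h, integral_add_measure (f.integrable_of_compactSpace _)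
    (f.integrable_of_compactSpace _), integral_add_measure (f.integrable_of_compactSpace _)
    (f.integrable_of_compactSpace _), sInt, sInt]
  ring

def sIntAddHom (f : C(𝕋, ℝ)) : SignedMeasure 𝕋 →+ ℝ :=
  AddMonoidHom.mk' (sInt · f) (sInt_add · · f)

theorem sInt_zero (f : C(𝕋, ℝ)) : sInt 0 f = 0 :=
  map_zero (sIntAddHom f)

theorem sInt_sub (m₁ m₂ : SignedMeasure 𝕋) (f : C(𝕋, ℝ)) :
    sInt (m₁ - m₂) f = sInt m₁ f - sInt m₂ f :=
  map_sub (sIntAddHom f) m₁ m₂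

theorem sInt_smul_dirac (c : ℝ) (y : 𝕋) (f : C(𝕋, ℝ)) : sInt (c • mdirac y) f = c * f y := by
  have h : c • mdirac y = (c.toNNReal • Measure.dirac y).toSignedMeasure
      - ((-c).toNNReal • Measure.dirac y).toSignedMeasure := by
    rw [Measure.toSignedMeasure_smul, Measure.toSignedMeasure_smul, NNReal.smul_def,
      NNReal.smul_def, Real.coe_toNNReal', Real.coe_toNNReal', ← mdirac]
    conv_lhs => rw [← max_zero_sub_max_neg_zero_eq_self c]
    exact sub_smul (max c 0) (max (-c) 0) (mdirac y)
  rw [sInt_eq_integral_sub_integral h, integral_smul_nnreal_measure, integral_smul_nnreal_measure,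
    integral_dirac, NNReal.smul_def, NNReal.smul_def, smul_eq_mul, smul_eq_mul, ← sub_mul,
    Real.coe_toNNReal', Real.coe_toNNReal', max_zero_sub_max_neg_zero_eq_self]

theorem sInt_discrete {ι : Type*} [Fintype ι] (a : ι → ℝ) (x : ι → 𝕋) (f : C(𝕋, ℝ)) :
    sInt (∑ i, a i • mdirac (x i)) f = ∑ i, a i * f (x i) := by
  simp only [← sInt_smul_dirac]
  exact map_sum (sIntAddHom f) _ _

theorem sInt_le_tv (m : SignedMeasure 𝕋) {ψ : C(𝕋, ℝ)} (hψ : ‖ψ‖ ≤ 1) : sInt m ψ ≤ tv m := by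
  refine le_csSup ⟨m.toJordanDecomposition.posPart.real Set.univ
    + m.toJordanDecomposition.negPart.real Set.univ, ?_⟩ ⟨ψ, hψ, rfl⟩
  rintro r ⟨φ, hφ, rfl⟩
  have hbound : ∀ μ : Measure 𝕋, [IsFiniteMeasure μ] → |∫ x, φ x ∂μ| ≤ μ.real Set.univ :=
    fun μ _ => by
      simpa using norm_integral_le_of_norm_le_const (μ := μ)
        (Filter.Eventually.of_forall fun y => (φ.norm_coe_le_norm y).trans hφ)
  have h₁ := abs_le.1 (hbound m.toJordanDecomposition.posPart)
  have h₂ := abs_le.1 (hbound m.toJordanDecomposition.negPart)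
  rw [sInt]
  linarith

theorem tv_le_of_forall_sInt_le {m : SignedMeasure 𝕋} {C : ℝ}
    (h : ∀ ψ : C(𝕋, ℝ), ‖ψ‖ ≤ 1 → sInt m ψ ≤ C) : tv m ≤ C :=
  csSup_le ⟨_, 0, by simp, rfl⟩ fun _ ⟨ψ, hψ, hr⟩ => hr ▸ h ψ hψ

theorem tv_zero : tv 0 = 0 :=
  le_antisymm (tv_le_of_forall_sInt_le fun ψ _ => (sInt_zero ψ).le)
    ((sInt_zero 0).symm.trans_le (sInt_le_tv 0 (by simp)))

theorem tv_add_le (m₁ m₂ : SignedMeasure 𝕋) : tv (m₁ + m₂) ≤ tv m₁ + tv m₂ :=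
  tv_le_of_forall_sInt_le fun ψ hψ =>
    (sInt_add m₁ m₂ ψ).trans_le (add_le_add (sInt_le_tv m₁ hψ) (sInt_le_tv m₂ hψ))

theorem tv_smul_dirac_le (c : ℝ) (y : 𝕋) : tv (c • mdirac y) ≤ |c| :=
  tv_le_of_forall_sInt_le fun ψ hψ =>
    (sInt_smul_dirac c y ψ).trans_le
      (mul_le_abs_of_abs_le_one (ψ.abs_apply_le_of_norm_le_one hψ y))

theorem tv_discrete {ι : Type*} [Fintype ι] {a : ι → ℝ} (ha : ∀ i, a i ≠ 0) {x : ι → 𝕋}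
    (hx : Function.Injective x) : tv (∑ i, a i • mdirac (x i)) = ∑ i, |a i| := by
  refine le_antisymm (tv_le_of_forall_sInt_le fun ψ hψ => ?_) ?_
  · rw [sInt_discrete]
    exact Finset.sum_le_sum fun i _ =>
      mul_le_abs_of_abs_le_one (ψ.abs_apply_le_of_norm_le_one hψ _)
  · obtain ⟨ψ, hψ, hψx⟩ := ContinuousMap.exists_norm_le_one_interpolating hx
      (v := fun i => Real.sign (a i)) fun i => by
        rcases Real.sign_apply_eq (a i) with h | h | h <;> simp [h]
    calc ∑ i, |a i| = sInt (∑ i, a i • mdirac (x i)) ψ := by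
          rw [sInt_discrete]
          exact Finset.sum_congr rfl fun i _ =>
            ((Real.mul_eq_abs_iff_eq_sign (ha i)).2 (hψx i)).symm
      _ ≤ _ := sInt_le_tv _ hψ

theorem norm_le_one_of_forall_sInt_le_tv {η : C(𝕋, ℝ)}
    (h : ∀ m : SignedMeasure 𝕋, sInt m η ≤ tv m) : ‖η‖ ≤ 1 := by
  refine (η.norm_le zero_le_one).2 fun y => abs_le.2 ⟨?_, ?_⟩
  · have := (h ((-1 : ℝ) • mdirac y)).trans (tv_smul_dirac_le (-1) y)
    rw [sInt_smul_dirac] at this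
    norm_num at this
    linarith
  · have := (h ((1 : ℝ) • mdirac y)).trans (tv_smul_dirac_le 1 y)
    rwa [sInt_smul_dirac, one_mul, abs_one] at this

theorem mem_subdiffTV_iff {m : SignedMeasure 𝕋} {η : C(𝕋, ℝ)} :
    η ∈ subdiffTV m ↔ ‖η‖ ≤ 1 ∧ sInt m η = tv m := by
  constructor
  · intro hη
    have hdual : ∀ m', sInt m' η ≤ tv m' := fun m' => by
      have h₁ := hη (m + m')
      rw [add_sub_cancel_left] at h₁
      linarith [tv_add_le m m']
    refine ⟨norm_le_one_of_forall_sInt_le_tv hdual, le_antisymm (hdual m) ?_⟩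
    have h₀ := hη 0
    rw [tv_zero, sInt_sub, sInt_zero] at h₀
    linarith
  · rintro ⟨hη, hm⟩ m'
    have := sInt_le_tv m' hη
    rw [sInt_sub, hm]
    linarith

/-- For a discrete measure `m = ∑ aᵢ δ_{xᵢ}` with nonzero amplitudes and distinct points,
the subdifferential of the total variation at `m` equals
`{ η ∈ C(𝕋) : ‖η‖_∞ ≤ 1 and η(xᵢ) = sign(aᵢ) for all i }`. -/
theorem subdiff_tv_discrete (N : ℕ) (a : Fin N → ℝ) (x : Fin N → 𝕋)
    (ha : ∀ i, a i ≠ 0) (hx : Function.Injective x) :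
    subdiffTV (∑ i, a i • mdirac (x i)) =
      { η : C(𝕋, ℝ) | ‖η‖ ≤ 1 ∧ ∀ i, η (x i) = Real.sign (a i) } := by
  ext η
  rw [mem_subdiffTV_iff, sInt_discrete, tv_discrete ha hx, Set.mem_ofPred_eq]
  refine and_congr_right fun hη => ?_
  simpa using Finset.univ.sum_mul_eq_sum_abs_iff (fun i _ => ha i)
    (fun i _ => η.abs_apply_le_of_norm_le_one hη (x i))
end
end

section
/- (Turán) Let P be a nontrivial complex polynomial of degree n such that |P(1)| = max_{|z|=1} |P(z)|. Then every root z₀ of P on the unit circle satisfies |arg z₀| ≥ π/n; moreover if |arg z₀| = π/n then P(z) = c(1 + zⁿ) for some nonzero constant c. -/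
/-!
`s(θ) = 2|P(e^{iθ})|²/|P(1)|² - 1` is a real trigonometric polynomial of degree `n` with `|s| ≤ 1`,
`s(0) = 1` and `s(arg z₀) = -1`. By the van der Corput–Schaake inequality `s'² + n²s² ≤ n²`
(proved by comparing `s` with a cosine of frequency `n` and counting zeros), `arccos ∘ s` has slope
at most `n` where `|s| < 1`, and it has to climb from `0` to `π` between `0` and `arg z₀`; hence
`|arg z₀| ≥ π/n`. In the equality case `arccos ∘ s` is linear there, so `s = cos(nθ)` everywhere and
`P` vanishes at every root of `1 + zⁿ`.
-/

open Polynomial Set Real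
open Complex (I ofReal)
open scoped Complex

noncomputable def toTrigPoly (N : ℕ) : ℂ[X] →ₗ[ℂ] ℝ → ℂ where
  toFun Q θ := cexp (-(N * θ * I)) * Q.eval (cexp (θ * I))
  map_add' P Q := by ext θ; simp [mul_add]
  map_smul' c Q := by
    ext θ
    simp only [eval_smul, smul_eq_mul, Pi.smul_apply, RingHom.id_apply]
    ring

/-- Trigonometric polynomials `∑_{|k| ≤ N} c_k e^{ikθ}`, written as `e^{-iNθ} Q(e^{iθ})` with `c_k`
the coefficient of `X^(k + N)` in `Q`. -/
noncomputable def trigPoly (N : ℕ) : Submodule ℂ (ℝ → ℂ) :=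
  (degreeLE ℂ (2 * N)).map (toTrigPoly N)

theorem toTrigPoly_apply (N : ℕ) (Q : ℂ[X]) (θ : ℝ) :
    toTrigPoly N Q θ = cexp (-(N * θ * I)) * Q.eval (cexp (θ * I)) := rfl

theorem mem_trigPoly {N : ℕ} {f : ℝ → ℂ} :
    f ∈ trigPoly N ↔ ∃ Q : ℂ[X], Q.natDegree ≤ 2 * N ∧ toTrigPoly N Q = f := by
  simp only [trigPoly, Submodule.mem_map, mem_degreeLE, natDegree_le_iff_degree_le, Nat.cast_mul,
    Nat.cast_ofNat]

theorem const_mem_trigPoly (N : ℕ) (c : ℂ) : (fun _ => c) ∈ trigPoly N := by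
  refine mem_trigPoly.2 ⟨C c * X ^ N, (natDegree_C_mul_X_pow_le c N).trans (by omega), ?_⟩
  ext θ
  rw [toTrigPoly_apply, eval_mul, eval_C, eval_pow, eval_X, ← Complex.exp_nat_mul,
    mul_left_comm, ← Complex.exp_add]
  ring_nf
  simp

theorem cos_mem_trigPoly (N : ℕ) (A a φ : ℝ) :
    ofReal ∘ (fun θ => A * Real.cos (N * (θ - a) + φ)) ∈ trigPoly N := by
  refine mem_trigPoly.2 ⟨C (A / 2 * cexp ((φ - N * a) * I)) * X ^ (2 * N) +
    C (A / 2 * cexp (-((φ - N * a) * I))), ?_, ?_⟩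
  · exact (natDegree_add_le _ _).trans
      (max_le (natDegree_C_mul_X_pow_le _ _) ((natDegree_C _).trans_le (Nat.zero_le _)))
  ext θ
  have e₁ : cexp (-(N * θ * I)) * (cexp ((φ - N * a) * I) * cexp (2 * N * (θ * I))) =
      cexp ((N * (θ - a) + φ) * I) := by
    rw [← Complex.exp_add, ← Complex.exp_add]; ring_nf
  have e₂ : cexp (-(N * θ * I)) * cexp (-((φ - N * a) * I)) = cexp (-(N * (θ - a) + φ) * I) := by
    rw [← Complex.exp_add]; ring_nf
  simp only [toTrigPoly_apply, eval_add, eval_mul, eval_C, eval_pow, eval_X, ← Complex.exp_nat_mul,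
    Function.comp_apply]
  push_cast
  rw [Complex.cos, ← e₁, ← e₂]
  ring

theorem hasDerivAt_toTrigPoly (N : ℕ) (Q : ℂ[X]) (θ : ℝ) :
    HasDerivAt (toTrigPoly N Q) (cexp (-(N * θ * I)) * I *
      (cexp (θ * I) * Q.derivative.eval (cexp (θ * I)) - N * Q.eval (cexp (θ * I)))) θ := by
  have hu : HasDerivAt (fun t : ℝ => cexp (t * I)) (cexp (θ * I) * I) θ := by
    simpa using ((hasDerivAt_id (θ : ℂ)).mul_const I).cexp.comp_ofReal
  have he : HasDerivAt (fun t : ℝ => cexp (-(N * t * I))) (cexp (-(N * θ * I)) * -(N * I)) θ := by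
    simpa using (((hasDerivAt_id (θ : ℂ)).const_mul (N : ℂ)).mul_const I).neg.cexp.comp_ofReal
  exact (he.mul ((Q.hasDerivAt _).comp θ hu)).congr_deriv (by simp only [Function.comp_apply]; ring)

theorem ofReal_comp_sub_mem_trigPoly {N : ℕ} {s t : ℝ → ℝ} (hs : ofReal ∘ s ∈ trigPoly N)
    (ht : ofReal ∘ t ∈ trigPoly N) : ofReal ∘ (s - t) ∈ trigPoly N := by
  convert sub_mem hs ht using 1
  ext θ
  simp

theorem differentiable_of_mem_trigPoly {N : ℕ} {f : ℝ → ℂ} (hf : f ∈ trigPoly N) :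
    Differentiable ℝ f := by
  obtain ⟨Q, -, rfl⟩ := mem_trigPoly.1 hf
  exact fun θ => (hasDerivAt_toTrigPoly N Q θ).differentiableAt

theorem differentiable_of_ofReal_comp_mem_trigPoly {N : ℕ} {s : ℝ → ℝ}
    (hs : ofReal ∘ s ∈ trigPoly N) : Differentiable ℝ s :=
  Complex.reCLM.differentiable.comp (differentiable_of_mem_trigPoly hs)

theorem injOn_cexp_mul_I {a b : ℝ} (h : b - a ≤ 2 * π) :
    InjOn (fun θ : ℝ => cexp (θ * I)) (Ioc a b) :=
  Subtype.val_injective.comp_injOn (Circle.exp_injOn_Ioc h)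

theorem Polynomial.eq_zero_of_eval_cexp_mul_I_eq_zero {Q : ℂ[X]} {a b : ℝ} (hab : a < b)
    (h : ∀ θ ∈ Ioc a b, Q.eval (cexp (θ * I)) = 0) : Q = 0 := by
  have hb : a < min b (a + 2 * π) := lt_min hab (by linarith [pi_pos])
  have hinj := injOn_cexp_mul_I (a := a) (b := min b (a + 2 * π))
    (by linarith [min_le_right b (a + 2 * π)])
  refine eq_zero_of_infinite_isRoot Q (((Ioc_infinite hb).image hinj).mono ?_)
  rintro _ ⟨θ, hθ, rfl⟩
  exact h θ ⟨hθ.1, hθ.2.trans (min_le_left _ _)⟩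

theorem eq_zero_of_eqOn_Ioc_of_mem_trigPoly {N : ℕ} {f : ℝ → ℂ} (hf : f ∈ trigPoly N) {a b : ℝ}
    (hab : a < b) (h : EqOn f 0 (Ioc a b)) : f = 0 := by
  obtain ⟨Q, -, rfl⟩ := mem_trigPoly.1 hf
  suffices hQ : Q = 0 by rw [hQ, map_zero]
  refine Polynomial.eq_zero_of_eval_cexp_mul_I_eq_zero hab fun θ hθ => ?_
  exact (mul_eq_zero.1 (h hθ)).resolve_left (Complex.exp_ne_zero _)

theorem eq_zero_of_double_zero_of_mem_trigPoly {N : ℕ} {f : ℝ → ℂ} (hf : f ∈ trigPoly N)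
    {c θ₀ : ℝ} {Z : Finset ℝ} (hθ₀ : θ₀ ∈ Ioc c (c + 2 * π))
    (hZ : ∀ x ∈ Z, x ∈ Ioc c (c + 2 * π) ∧ x ≠ θ₀ ∧ f x = 0)
    (hf₀ : f θ₀ = 0) (hf₀' : HasDerivAt f 0 θ₀) (hcard : 2 * N < Z.card + 2) : f = 0 := by
  obtain ⟨Q, hQ, rfl⟩ := mem_trigPoly.1 hf
  have eval_eq_zero {θ : ℝ} (h : toTrigPoly N Q θ = 0) : Q.eval (cexp (θ * I)) = 0 :=
    (mul_eq_zero.1 h).resolve_left (Complex.exp_ne_zero _)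
  by_contra hf0
  have hQ0 : Q ≠ 0 := by rintro rfl; exact hf0 (map_zero _)
  set u := cexp (θ₀ * I)
  have hroot : Q.eval u = 0 := eval_eq_zero hf₀
  have hroot' : Q.derivative.eval u = 0 := by
    have h := (hasDerivAt_toTrigPoly N Q θ₀).unique hf₀'
    rw [hroot, mul_zero, sub_zero] at h
    simpa [Complex.exp_ne_zero, Complex.I_ne_zero] using h
  obtain ⟨R, hR⟩ : (X - C u) ^ 2 ∣ Q := (le_rootMultiplicity_iff hQ0).1
    ((one_lt_rootMultiplicity_iff_isRoot hQ0).2 ⟨hroot, hroot'⟩)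
  have hR0 : R ≠ 0 := by rintro rfl; exact hQ0 (by simpa using hR)
  have hinj : InjOn (fun θ : ℝ => cexp (θ * I)) (Ioc c (c + 2 * π)) :=
    injOn_cexp_mul_I (by linarith)
  have hsub : (Z.image fun θ : ℝ => cexp (θ * I)).val ⊆ R.roots := by
    intro z hz
    obtain ⟨x, hx, rfl⟩ := Finset.mem_image.1 hz
    obtain ⟨hxc, hxθ, hfx⟩ := hZ x hx
    have hne : (cexp (x * I) - u) ^ 2 ≠ 0 :=
      pow_ne_zero _ (sub_ne_zero.2 fun h => hxθ (hinj hxc hθ₀ h))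
    have h := eval_eq_zero hfx
    rw [hR, eval_mul] at h
    exact (mem_roots hR0).2 ((mul_eq_zero.1 h).resolve_left (by simpa using hne))
  have hZR := card_le_degree_of_subset_roots hsub
  rw [Finset.card_image_of_injOn (hinj.mono fun x hx => (hZ x hx).1)] at hZR
  have hdeg : Q.natDegree = 2 + R.natDegree := by
    rw [hR, natDegree_mul (pow_ne_zero _ (X_sub_C_ne_zero u)) hR0, natDegree_pow, natDegree_X_sub_C]
  omega

theorem exists_mem_Ioo_eq_zero_of_mul_neg {g : ℝ → ℝ} (hg : Continuous g) {x y : ℝ} (hxy : x ≤ y)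
    (h : g x * g y < 0) : ∃ z ∈ Ioo x y, g z = 0 := by
  rcases mul_neg_iff.1 h with ⟨hx, hy⟩ | ⟨hx, hy⟩
  · exact intermediate_value_Ioo' hxy hg.continuousOn ⟨hy, hx⟩
  · exact intermediate_value_Ioo hxy hg.continuousOn ⟨hx, hy⟩

theorem not_forall_mul_neg_of_double_zero {N : ℕ} {g : ℝ → ℝ} (hg : ofReal ∘ g ∈ trigPoly N)
    {θ₀ : ℝ} (hg₀ : g θ₀ = 0) (hg₀' : HasDerivAt g 0 θ₀) {p : ℕ → ℝ} (hp : Monotone p)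
    (hperiod : p (2 * N) = p 0 + 2 * π) (hθ₀ : θ₀ ∈ Ioc (p 0) (p 0 + 2 * π)) :
    ¬ ∀ k, g (p k) * g (p (k + 1)) < 0 := by
  intro halt
  have hgc : Continuous g := (differentiable_of_ofReal_comp_mem_trigPoly hg).continuous
  choose q hq hgq using fun k => exists_mem_Ioo_eq_zero_of_mul_neg hgc (hp k.le_succ) (halt k)
  have hqmono : StrictMono q := strictMono_nat_of_lt_succ fun k => (hq k).2.trans (hq (k + 1)).1
  set Z := ((Finset.range (2 * N)).image q).erase θ₀
  have hZ : ∀ x ∈ Z, x ∈ Ioc (p 0) (p 0 + 2 * π) ∧ x ≠ θ₀ ∧ (ofReal ∘ g) x = 0 := by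
    intro x hx
    obtain ⟨hxθ, hx⟩ := Finset.mem_erase.1 hx
    obtain ⟨k, hk, rfl⟩ := Finset.mem_image.1 hx
    have hk : k + 1 ≤ 2 * N := Finset.mem_range.1 hk
    refine ⟨⟨(hp k.zero_le).trans_lt (hq k).1, ?_⟩, hxθ, by simp [hgq]⟩
    exact (hq k).2.le.trans (hperiod ▸ hp hk)
  have hcard : 2 * N < Z.card + 2 := by
    have : 2 * N - 1 ≤ Z.card := by
      simpa [Finset.card_image_of_injective _ hqmono.injective] using
        Finset.pred_card_le_card_erase (s := (Finset.range (2 * N)).image q) (a := θ₀)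
    omega
  have hzero := eq_zero_of_double_zero_of_mem_trigPoly hg hθ₀ hZ (by simp [hg₀])
    (by have h := hg₀'.ofReal_comp; rw [Complex.ofReal_zero] at h; exact h) hcard
  have h0 : g (p 0) = 0 := by simpa using congrFun hzero (p 0)
  simpa [h0] using halt 0

theorem exists_polar_Ioc (x y : ℝ) :
    ∃ A ψ : ℝ, A ^ 2 = x ^ 2 + y ^ 2 ∧ 0 ≤ A ∧ ψ ∈ Ioc 0 (2 * π) ∧
      A * Real.cos ψ = x ∧ A * Real.sin ψ = y := by
  set w : ℂ := ⟨x, y⟩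
  refine ⟨‖w‖, Complex.arg (-w) + π, ?_, norm_nonneg w, ⟨?_, ?_⟩, ?_, ?_⟩
  · rw [Complex.sq_norm, Complex.normSq_apply]
    ring
  · linarith [Complex.neg_pi_lt_arg (-w)]
  · linarith [Complex.arg_le_pi (-w)]
  · have h := Complex.norm_mul_cos_arg (-w)
    rw [norm_neg, Complex.neg_re] at h
    rw [Real.cos_add_pi]
    linarith
  · have h := Complex.norm_mul_sin_arg (-w)
    rw [norm_neg, Complex.neg_im] at h
    rw [Real.sin_add_pi]
    linarith

theorem deriv_sq_add_sq_mul_le_of_mem_trigPoly {N : ℕ} (hN : 0 < N) {s : ℝ → ℝ}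
    (hs : ofReal ∘ s ∈ trigPoly N) (hbound : ∀ θ, |s θ| ≤ 1) (θ₀ : ℝ) :
    deriv s θ₀ ^ 2 + N ^ 2 * s θ₀ ^ 2 ≤ N ^ 2 := by
  by_contra! hlt
  have hN' : (0 : ℝ) < N := Nat.cast_pos.2 hN
  set d := deriv s θ₀
  -- The cosine `S` of amplitude `A > 1` agreeing with `s` to first order at `θ₀` takes the values
  -- `±A` alternately on the grid `p k`, so `s - S` changes sign `2N` times in one period besides
  -- its double zero at `θ₀`. Taking `ψ ∈ (0, 2π]` puts `θ₀` in the window `(p 0, p 0 + 2π]`.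
  obtain ⟨A, ψ, hA2, hA₀, ⟨hψ₀, hψ₁⟩, hAcos, hAsin⟩ := exists_polar_Ioc (s θ₀) (-d / N)
  have hA : 1 < A := by
    have : 1 < A ^ 2 := by
      rw [hA2, div_pow, ← mul_lt_mul_iff_of_pos_left (pow_pos hN' 2)]
      field_simp
      linarith
    nlinarith
  set S : ℝ → ℝ := fun θ => A * Real.cos (N * (θ - θ₀) + ψ)
  have hS' : HasDerivAt S d θ₀ := by
    have := ((((hasDerivAt_id θ₀).sub_const θ₀).const_mul (N : ℝ)).add_const ψ).cos.const_mul A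
    refine this.congr_deriv ?_
    rw [id, sub_self, mul_zero, zero_add, mul_one, show A * (-sin ψ * N) = -(A * sin ψ) * N by ring,
      hAsin]
    field_simp
  have hg : ofReal ∘ (s - S) ∈ trigPoly N :=
    ofReal_comp_sub_mem_trigPoly hs (cos_mem_trigPoly N A θ₀ ψ)
  set p : ℕ → ℝ := fun k => θ₀ + (k * π - ψ) / N
  have hSp (k : ℕ) : S (p k) = A * (-1) ^ k := by
    simp only [S, p]
    rw [← Real.cos_nat_mul_pi]
    congr 2
    field_simp
    ring
  refine not_forall_mul_neg_of_double_zero hg (θ₀ := θ₀) (p := p) ?_ ?_ ?_ ?_ ?_ fun k => ?_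
  · simp [S, hAcos]
  · exact ((differentiable_of_ofReal_comp_mem_trigPoly hs θ₀).hasDerivAt.sub hS').congr_deriv
      (sub_self d)
  · intro k l hkl
    simp only [p]
    gcongr
  · simp only [p]
    field_simp
    push_cast
    ring
  · have hψN : ψ / N ≤ 2 * π := (div_le_self hψ₀.le (by exact_mod_cast hN)).trans hψ₁
    simp only [p, CharP.cast_eq_zero, zero_mul, zero_sub, neg_div]
    constructor <;> linarith [div_pos hψ₀ hN']
  · have h₁ := abs_le.1 (hbound (p k))
    have h₂ := abs_le.1 (hbound (p (k + 1)))
    simp only [Pi.sub_apply, hSp, pow_succ]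
    rcases neg_one_pow_eq_or ℝ k with h | h <;> rw [h] <;> nlinarith

theorem exists_crossing_subinterval {f : ℝ → ℝ} {a b u v : ℝ} (hf : ContinuousOn f (Icc a b))
    (hab : a ≤ b) (ha : f a = u) (hb : f b = v) (huv : u ≠ v) :
    ∃ a' b', a ≤ a' ∧ a' < b' ∧ b' ≤ b ∧ f a' = u ∧ f b' = v ∧
      ∀ x ∈ Ioo a' b', f x ≠ u ∧ f x ≠ v := by
  set T := Icc a b ∩ f ⁻¹' {v}
  have hT : IsClosed T := hf.preimage_isClosed_of_isClosed isClosed_Icc isClosed_singleton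
  have hTbdd : BddBelow T := ⟨a, fun x hx => hx.1.1⟩
  obtain ⟨⟨hab', hb'b⟩, hfb'⟩ := hT.csInf_mem ⟨b, ⟨hab, le_rfl⟩, hb⟩ hTbdd
  set b' := sInf T
  set S := Icc a b' ∩ f ⁻¹' {u}
  have hS : IsClosed S := (hf.mono (Icc_subset_Icc_right hb'b)).preimage_isClosed_of_isClosed
    isClosed_Icc isClosed_singleton
  have hSbdd : BddAbove S := ⟨b', fun x hx => hx.1.2⟩
  obtain ⟨⟨haa', ha'b'⟩, hfa'⟩ := hS.csSup_mem ⟨a, ⟨le_rfl, hab'⟩, ha⟩ hSbdd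
  refine ⟨sSup S, b', haa', ha'b'.lt_of_ne fun h => huv ?_, hb'b, hfa', hfb', fun x hx => ⟨?_, ?_⟩⟩
  · rw [← mem_singleton_iff.1 hfa', ← mem_singleton_iff.1 hfb', h]
  · exact fun hx' => hx.1.not_ge (le_csSup hSbdd ⟨⟨haa'.trans hx.1.le, hx.2.le⟩, hx'⟩)
  · exact fun hx' => hx.2.not_ge (csInf_le hTbdd ⟨⟨haa'.trans hx.1.le, hx.2.le.trans hb'b⟩, hx'⟩)

theorem arccos_comp_sub_le {s : ℝ → ℝ} {N a b : ℝ} (hs : Differentiable ℝ s) (hN : 0 ≤ N)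
    (hbern : ∀ θ, deriv s θ ^ 2 + N ^ 2 * s θ ^ 2 ≤ N ^ 2) (hlt : ∀ θ ∈ Ioo a b, |s θ| < 1)
    ⦃x : ℝ⦄ (hx : x ∈ Icc a b) ⦃y : ℝ⦄ (hy : y ∈ Icc a b) (hxy : x ≤ y) :
    arccos (s y) - arccos (s x) ≤ N * (y - x) := by
  have hderiv (θ : ℝ) (hθ : θ ∈ Ioo a b) :
      HasDerivAt (arccos ∘ s) (-(1 / √(1 - s θ ^ 2)) * deriv s θ) θ := by
    obtain ⟨h₁, h₂⟩ := abs_lt.1 (hlt θ hθ)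
    exact (hasDerivAt_arccos h₁.ne' h₂.ne).comp θ (hs θ).hasDerivAt
  refine (convex_Icc a b).image_sub_le_mul_sub_of_deriv_le
    (continuous_arccos.comp hs.continuous).continuousOn ?_ ?_ x hx y hy hxy
  · rw [interior_Icc]
    exact fun θ hθ => (hderiv θ hθ).differentiableAt.differentiableWithinAt
  · rw [interior_Icc]
    intro θ hθ
    have hr : 0 < √(1 - s θ ^ 2) := by
      rw [Real.sqrt_pos, sub_pos, ← sq_abs]
      exact pow_lt_one₀ (abs_nonneg _) (hlt θ hθ) two_ne_zero
    have hsq : (-deriv s θ) ^ 2 ≤ (N * √(1 - s θ ^ 2)) ^ 2 := by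
      rw [mul_pow, Real.sq_sqrt (Real.sqrt_pos.1 hr).le, neg_sq]
      linarith [hbern θ]
    rw [(hderiv θ hθ).deriv, neg_mul, one_div_mul_eq_div, ← neg_div, div_le_iff₀ hr]
    exact (le_abs_self _).trans (abs_le_of_sq_le_sq hsq (by positivity))

theorem pi_div_le_sub_of_mem_trigPoly {N : ℕ} (hN : 0 < N) {s : ℝ → ℝ}
    (hs : ofReal ∘ s ∈ trigPoly N) (hbound : ∀ θ, |s θ| ≤ 1) {a b : ℝ} (hab : a ≤ b)
    (ha : s a = 1) (hb : s b = -1) :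
    π / N ≤ b - a ∧ (b - a = π / N → s = fun θ => Real.cos (N * (θ - a))) := by
  have hN' : (0 : ℝ) < N := Nat.cast_pos.2 hN
  have hsd := differentiable_of_ofReal_comp_mem_trigPoly hs
  obtain ⟨a', b', haa', ha'b', hb'b, ha', hb', hmid⟩ :=
    exists_crossing_subinterval hsd.continuous.continuousOn hab ha hb (by norm_num)
  have hlt (θ : ℝ) (hθ : θ ∈ Ioo a' b') : |s θ| < 1 := by
    refine (hbound θ).lt_of_ne fun h => ?_
    rcases (abs_eq zero_le_one).1 h with h | h
    exacts [(hmid θ hθ).1 h, (hmid θ hθ).2 h]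
  have hlip := arccos_comp_sub_le hsd hN'.le
    (deriv_sq_add_sq_mul_le_of_mem_trigPoly hN hs hbound) hlt
  have hπ : π ≤ N * (b' - a') := by
    simpa [ha', hb'] using hlip (left_mem_Icc.2 ha'b'.le) (right_mem_Icc.2 ha'b'.le) ha'b'.le
  have hπ' : π ≤ N * (b - a) := hπ.trans (by gcongr)
  refine ⟨by rwa [div_le_iff₀ hN', mul_comm], fun heq => ?_⟩
  have hNba : N * (b - a) = π := by rw [heq]; field_simp
  obtain rfl : a' = a := by nlinarith
  obtain rfl : b' = b := by nlinarith
  have hcos : ofReal ∘ (s - fun θ => Real.cos (N * (θ - a'))) ∈ trigPoly N :=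
    ofReal_comp_sub_mem_trigPoly hs (by convert cos_mem_trigPoly N 1 a' 0 using 1; ext; simp)
  have hzero : EqOn (ofReal ∘ (s - fun θ => Real.cos (N * (θ - a')))) 0 (Ioc a' b') := by
    intro x hx
    have h₁ := hlip (left_mem_Icc.2 hab) (Ioc_subset_Icc_self hx) hx.1.le
    have h₂ := hlip (Ioc_subset_Icc_self hx) (right_mem_Icc.2 hab) hx.2
    rw [ha, arccos_one] at h₁
    rw [hb, arccos_neg_one] at h₂
    have hx' : arccos (s x) = N * (x - a') := by linarith
    obtain ⟨h₃, h₄⟩ := abs_le.1 (hbound x)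
    simp [← hx', cos_arccos h₃ h₄]
  ext θ
  have h := congrFun (eq_zero_of_eqOn_Ioc_of_mem_trigPoly hcos ha'b' hzero) θ
  simp only [Function.comp_apply, Pi.sub_apply, Pi.zero_apply, Complex.ofReal_eq_zero,
    sub_eq_zero] at h
  exact h

theorem pi_div_le_abs_of_mem_trigPoly {N : ℕ} (hN : 0 < N) {s : ℝ → ℝ}
    (hs : ofReal ∘ s ∈ trigPoly N) (hbound : ∀ θ, |s θ| ≤ 1) (h₀ : s 0 = 1) {α : ℝ}
    (hα : s α = -1) : π / N ≤ |α| ∧ (|α| = π / N → s = fun θ => Real.cos (N * θ)) := by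
  rcases le_total 0 α with hα₀ | hα₀
  · rw [abs_of_nonneg hα₀]
    simpa using pi_div_le_sub_of_mem_trigPoly hN hs hbound hα₀ h₀ hα
  · rw [abs_of_nonpos hα₀]
    have hs' : ofReal ∘ (-s) ∈ trigPoly N := by
      convert neg_mem hs using 1
      ext θ
      simp
    obtain ⟨hle, heq⟩ := pi_div_le_sub_of_mem_trigPoly hN hs' (by simpa using hbound) hα₀
      (by simp [hα]) (by simp [h₀])
    refine ⟨by simpa using hle, fun h => funext fun θ => ?_⟩
    have hθ := congrFun (heq (by simpa using h)) θ
    have hNα : N * (θ - α) = N * θ + π := by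
      rw [mul_sub, ← neg_neg α, h]
      field_simp
      ring
    rw [hNα, Real.cos_add_pi] at hθ
    simpa using hθ

theorem norm_sq_eval_cexp_mem_trigPoly {P : ℂ[X]} {n : ℕ} (hP : P.natDegree ≤ n) :
    (fun θ : ℝ => ((‖P.eval (cexp (θ * I))‖ ^ 2 : ℝ) : ℂ)) ∈ trigPoly n := by
  refine mem_trigPoly.2 ⟨P * (reflect n P).map (starRingEnd ℂ), ?_, ?_⟩
  · refine natDegree_mul_le.trans ?_
    have := (natDegree_map_le (f := starRingEnd ℂ) (p := reflect n P)).trans natDegree_reflect_le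
    rw [max_eq_left hP] at this
    omega
  ext θ
  set u := cexp (θ * I)
  have hu : u ≠ 0 := Complex.exp_ne_zero _
  have hconj : starRingEnd ℂ u = u⁻¹ := by
    rw [← Complex.exp_conj, ← Complex.exp_neg]
    simp
  let _ : Invertible u⁻¹ := invertibleOfNonzero (inv_ne_zero hu)
  have hrefl := eval₂_reflect_mul_pow (starRingEnd ℂ) u⁻¹ n P hP
  rw [invOf_eq_inv, inv_inv, ← hconj, eval₂_at_apply, hconj, inv_pow, ← div_eq_mul_inv,
    div_eq_iff (pow_ne_zero _ hu)] at hrefl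
  rw [toTrigPoly_apply, eval_mul, eval_map, hrefl, Complex.ofReal_pow, ← Complex.mul_conj',
    Complex.exp_neg, ← Complex.exp_nat_mul]
  field_simp
  ring

theorem exists_eq_C_mul_one_add_X_pow {P : ℂ[X]} {n : ℕ} (hn : 0 < n) (hP : P ≠ 0)
    (hdeg : P.natDegree = n)
    (hroots : ∀ θ : ℝ, Real.cos (n * θ) = -1 → P.eval (cexp (θ * I)) = 0) :
    ∃ c : ℂ, c ≠ 0 ∧ P = C c * (1 + X ^ n) := by
  have hmonic : (X ^ n - C (-1) : ℂ[X]).Monic := monic_X_pow_sub_C _ hn.ne'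
  have hdvd : (X ^ n - C (-1) : ℂ[X]) ∣ P := by
    refine Splits.dvd_of_roots_le_roots (IsAlgClosed.splits _) hmonic.ne_zero ?_
    rw [Multiset.le_iff_subset (nodup_roots (separable_X_pow_sub_C _ (by exact_mod_cast hn.ne')
      (by norm_num)))]
    intro z hz
    rw [mem_roots hmonic.ne_zero, IsRoot, eval_sub, eval_pow, eval_X, eval_C, sub_eq_zero] at hz
    have hz₁ : ‖z‖ = 1 := by
      rw [← pow_eq_one_iff_of_nonneg (norm_nonneg z) hn.ne', ← norm_pow, hz, norm_neg, norm_one]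
    have hzexp : cexp (z.arg * I) = z := by
      simpa [hz₁] using Complex.norm_mul_exp_arg_mul_I z
    have hcos : Real.cos (n * z.arg) = -1 := by
      rw [← Complex.exp_ofReal_mul_I_re, Complex.ofReal_mul, Complex.ofReal_natCast, mul_assoc,
        Complex.exp_nat_mul, hzexp, hz, Complex.neg_re, Complex.one_re]
    exact (mem_roots hP).2 (hzexp ▸ hroots _ hcos)
  refine ⟨P.leadingCoeff, leadingCoeff_ne_zero.2 hP, ?_⟩
  rw [show (1 + X ^ n : ℂ[X]) = X ^ n - C (-1) by rw [C_neg, C_1, sub_neg_eq_add, add_comm]]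
  exact eq_leadingCoeff_mul_of_monic_of_dvd_of_natDegree_le hmonic hdvd
    (by rw [natDegree_X_pow_sub_C, hdeg])

theorem abs_two_div_sq_mul_sq_sub_one_le {x M : ℝ} (hM : 0 < M) (hx : 0 ≤ x) (hxM : x ≤ M) :
    |2 / M ^ 2 * x ^ 2 - 1| ≤ 1 := by
  have hx2 : x ^ 2 ≤ M ^ 2 := pow_le_pow_left₀ hx hxM 2
  rw [abs_le, div_mul_eq_mul_div, le_sub_iff_add_le, sub_le_iff_le_add, le_div_iff₀ (by positivity),
    div_le_iff₀ (by positivity)]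
  constructor <;> nlinarith

theorem turan_general (P : Polynomial ℂ) (n : ℕ) (hn : 1 ≤ n)
    (hdeg : P.natDegree = n)
    (hmax : ∀ z : ℂ, ‖z‖ = 1 → ‖P.eval z‖ ≤ ‖P.eval 1‖)
    (z₀ : ℂ) (hz₀ : ‖z₀‖ = 1) (hroot : P.eval z₀ = 0) :
    Real.pi / n ≤ |Complex.arg z₀| ∧
      (|Complex.arg z₀| = Real.pi / n → ∃ c : ℂ, c ≠ 0 ∧ P = C c * (1 + X ^ n)) := by
  have hP : P ≠ 0 := by rintro rfl; simp at hdeg; omega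
  have hmax' (θ : ℝ) := hmax _ (Complex.norm_exp_ofReal_mul_I θ)
  have hM : 0 < ‖P.eval 1‖ := by
    refine norm_pos_iff.2 fun h => hP ?_
    exact eq_zero_of_eval_cexp_mul_I_eq_zero one_pos fun θ _ => by simpa [h] using hmax' θ
  set s : ℝ → ℝ := fun θ => 2 / ‖P.eval 1‖ ^ 2 * ‖P.eval (cexp (θ * I))‖ ^ 2 - 1
  have hs : ofReal ∘ s ∈ trigPoly n := by
    convert sub_mem (Submodule.smul_mem _ (2 / ‖P.eval 1‖ ^ 2 : ℂ)
      (norm_sq_eval_cexp_mem_trigPoly hdeg.le)) (const_mem_trigPoly n 1) using 1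
    ext θ
    simp [s]
  have hbound (θ : ℝ) : |s θ| ≤ 1 := abs_two_div_sq_mul_sq_sub_one_le hM (norm_nonneg _) (hmax' θ)
  have hz₀' : cexp (z₀.arg * I) = z₀ := by simpa [hz₀] using Complex.norm_mul_exp_arg_mul_I z₀
  obtain ⟨hle, heq⟩ := pi_div_le_abs_of_mem_trigPoly hn hs hbound (by simp [s, hM.ne']; norm_num)
    (α := z₀.arg) (by simp [s, hz₀', hroot])
  refine ⟨hle, fun h => exists_eq_C_mul_one_add_X_pow hn hP hdeg fun θ hθ => ?_⟩
  simpa [s, hθ, hM.ne'] using congrFun (heq h) θ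

/-- **Turán's theorem.** Let `P` be a nontrivial complex polynomial of degree `n` such that
`|P(1)| = max_{|z|=1} |P(z)|`. Then every root `z₀` of `P` on the unit circle satisfies
`|arg z₀| ≥ π/n`; moreover if `|arg z₀| = π/n` then `P(z) = c(1 + zⁿ)` for some `c ≠ 0`. -/
theorem turan (P : Polynomial ℂ) (n : ℕ) (hn : 1 ≤ n) (hP : P ≠ 0)
    (hdeg : P.natDegree = n)
    (hmax : ∀ z : ℂ, ‖z‖ = 1 → ‖P.eval z‖ ≤ ‖P.eval 1‖)
    (z₀ : ℂ) (hz₀ : ‖z₀‖ = 1) (hroot : P.eval z₀ = 0) :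
    Real.pi / n ≤ |Complex.arg z₀| ∧
      (|Complex.arg z₀| = Real.pi / n → ∃ c : ℂ, c ≠ 0 ∧ P = C c * (1 + X ^ n)) :=
  turan_general P n hn hdeg hmax z₀ hz₀ hroot
end

section
/- (Injectivity of Γ_x for the Dirichlet kernel) Let x₁, …, x_N ∈ T be pairwise distinct with N ≤ f_c. If u, v ∈ R^N satisfy Σ_j ( u_j φ(t − x_j) + v_j φ'(t − x_j) ) = 0 for all t ∈ T, where φ is the Dirichlet kernel of degree f_c, then u = v = 0. -/
/-!
In exponentials, `φ(t) = ∑_{|k| ≤ f_c} e^{2πikt}`, so by linear independence of the characters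
the hypothesis says `∑ⱼ (uⱼ + 2πik vⱼ) wⱼ^k = 0` for all `|k| ≤ f_c`, where the
`wⱼ = e^{-2πi xⱼ}` are distinct points of the unit circle. After the shift `k = m - f_c` this is a
confluent Vandermonde system `∑ⱼ (Aⱼ + m Bⱼ) wⱼ^m = 0`, `m ≤ 2 f_c`, with every node doubled.
Pairing it with the coefficients of a polynomial `p` of degree `≤ 2 f_c` gives
`∑ⱼ (Aⱼ p(wⱼ) + Bⱼ wⱼ p'(wⱼ)) = 0`; the polynomials `∏_{l ≠ j} (X - w_l)²` and
`(X - wⱼ) ∏_{l ≠ j} (X - w_l)²` have degree `< 2N ≤ 2 f_c + 1` and isolate `Aⱼ` and `Bⱼ`.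
-/

open Polynomial Finset AddCircle Real

theorem Polynomial.isRoot_derivative_of_sq_dvd {R : Type*} [CommRing R] {p : R[X]} {a : R}
    (h : (X - C a) ^ 2 ∣ p) : (derivative p).IsRoot a := by
  obtain ⟨q, rfl⟩ := h
  simp [derivative_mul, derivative_pow]

theorem Finset.sum_Icc_neg_eq_add_sum_Icc_one {M : Type*} [AddCommGroup M] (f : ℤ → M) (n : ℕ) :
    ∑ k ∈ Icc (-n : ℤ) n, f k = f 0 + ∑ k ∈ Icc 1 n, (f k + f (-k)) := by
  induction n with
  | zero => simp
  | succ n ih =>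
    rw [Nat.cast_succ, sum_Icc_succ_eq_add_endpoints, ih, sum_Icc_succ_top (by omega)]
    push_cast
    abel

section ConfluentVandermonde

variable {K ι : Type*} [Field K] [Fintype ι] {w A B : ι → K}

theorem sum_eval_add_mul_eval_derivative_eq_zero {d : ℕ}
    (h : ∀ m < d, ∑ i, (A i + m * B i) * w i ^ m = 0) {p : K[X]} (hp : p.natDegree < d) :
    ∑ i, (A i * p.eval (w i) + B i * (w i * (derivative p).eval (w i))) = 0 := by
  have hmonomial (z : K) (m : ℕ) : z * (m * z ^ (m - 1)) = m * z ^ m := by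
    rcases m with _ | m
    · simp
    · rw [Nat.add_sub_cancel, pow_succ]; ring
  rw [p.as_sum_range' d hp]
  simp only [map_sum, eval_finsetSum, derivative_monomial, eval_monomial, mul_sum,
    ← sum_add_distrib]
  rw [sum_comm]
  refine sum_eq_zero fun m hm => ?_
  calc ∑ i, (A i * (p.coeff m * w i ^ m) + B i * (w i * (p.coeff m * m * w i ^ (m - 1))))
      = p.coeff m * ∑ i, (A i + m * B i) * w i ^ m := by
        rw [mul_sum]
        refine sum_congr rfl fun i _ => ?_
        linear_combination B i * p.coeff m * hmonomial (w i) m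
    _ = 0 := by rw [h m (mem_range.1 hm), mul_zero]

theorem sum_eval_add_mul_eval_derivative_eq_single {p : K[X]} (i : ι)
    (hp : ∀ j ≠ i, (X - C (w j)) ^ 2 ∣ p) :
    ∑ j, (A j * p.eval (w j) + B j * (w j * (derivative p).eval (w j)))
      = A i * p.eval (w i) + B i * (w i * (derivative p).eval (w i)) := by
  refine sum_eq_single_of_mem i (mem_univ i) fun j _ hji => ?_
  have hroot : p.IsRoot (w j) := dvd_iff_isRoot.1 ((dvd_pow_self _ two_ne_zero).trans (hp j hji))
  rw [hroot.eq_zero, (isRoot_derivative_of_sq_dvd (hp j hji)).eq_zero]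
  ring

theorem eq_zero_of_sum_add_mul_pow_eq_zero (hw : Function.Injective w) (hw₀ : ∀ i, w i ≠ 0)
    {d : ℕ} (hd : 2 * Fintype.card ι ≤ d) (h : ∀ m < d, ∑ i, (A i + m * B i) * w i ^ m = 0) :
    A = 0 ∧ B = 0 := by
  classical
  suffices ∀ i, A i = 0 ∧ B i = 0 from ⟨funext fun i => (this i).1, funext fun i => (this i).2⟩
  intro i
  set P : K[X] := ∏ j ∈ univ.erase i, (X - C (w j)) ^ 2
  have hP_dvd : ∀ j ≠ i, (X - C (w j)) ^ 2 ∣ P := fun j hj =>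
    dvd_prod_of_mem _ (mem_erase.2 ⟨hj, mem_univ j⟩)
  have hP_ne : P.eval (w i) ≠ 0 := by
    simp only [P, eval_prod, eval_pow, eval_sub, eval_X, eval_C]
    exact prod_ne_zero_iff.2 fun j hj =>
      pow_ne_zero _ (sub_ne_zero.2 fun h => (mem_erase.1 hj).1 (hw h).symm)
  have hP_deg : P.natDegree + 1 < d := by
    have hcard : 0 < Fintype.card ι := Fintype.card_pos_iff.2 ⟨i⟩
    have : P.natDegree = 2 * (Fintype.card ι - 1) := by
      rw [natDegree_prod_of_monic _ _ fun j _ => (monic_X_sub_C _).pow 2]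
      simp [card_erase_of_mem, mul_comm]
    omega
  have hB : B i = 0 := by
    have := sum_eval_add_mul_eval_derivative_eq_zero h (p := (X - C (w i)) * P)
      (natDegree_mul_le.trans_lt (by simpa [add_comm] using hP_deg))
    rw [sum_eval_add_mul_eval_derivative_eq_single i
      fun j hj => dvd_mul_of_dvd_right (hP_dvd j hj) _] at this
    simpa [derivative_mul, hw₀ i, hP_ne] using this
  have hA : A i = 0 := by
    have := sum_eval_add_mul_eval_derivative_eq_zero h (p := P) (by omega)
    rw [sum_eval_add_mul_eval_derivative_eq_single i hP_dvd, hB] at this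
    simpa [hP_ne] using this
  exact ⟨hA, hB⟩

theorem eq_zero_of_sum_add_mul_zpow_eq_zero (hw : Function.Injective w) (hw₀ : ∀ i, w i ≠ 0)
    {n : ℕ} (hn : Fintype.card ι ≤ n)
    (h : ∀ k ∈ Icc (-n : ℤ) n, ∑ i, (A i + k * B i) * w i ^ k = 0) : A = 0 ∧ B = 0 := by
  have hshift : ∀ m < 2 * n + 1, ∑ i, ((A i - n * B i) * (w i ^ n)⁻¹
      + m * (B i * (w i ^ n)⁻¹)) * w i ^ m = 0 := fun m hm => by
    rw [← h (m - n) (by simp only [mem_Icc]; omega)]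
    refine sum_congr rfl fun i _ => ?_
    rw [zpow_sub₀ (hw₀ i), zpow_natCast, zpow_natCast]
    push_cast
    ring
  obtain ⟨hA, hB⟩ := eq_zero_of_sum_add_mul_pow_eq_zero hw hw₀ (by omega) hshift
  have hB' : B = 0 := funext fun i => by simpa [hw₀ i] using congrFun hB i
  exact ⟨funext fun i => by simpa [hw₀ i, hB'] using congrFun hA i, hB'⟩

end ConfluentVandermonde

section Fourier

variable {T : ℝ}

theorem fourier_sub (k : ℤ) (a b : AddCircle T) :
    fourier k (a - b) = fourier k a * (toCircle (-b) : ℂ) ^ k := by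
  rw [fourier_apply, fourier_apply, sub_eq_add_neg, smul_add, toCircle_add, toCircle_zsmul (-b)]
  push_cast
  rfl

theorem linearIndependent_fourier [Fact (0 < T)] :
    LinearIndependent ℂ (fun n : ℤ => fourier (T := T) n) :=
  LinearIndependent.of_comp (ContinuousMap.toLp (E := ℂ) 2 (haarAddCircle (T := T)) ℂ).toLinearMap
    orthonormal_fourier.linearIndependent

theorem eq_zero_of_forall_sum_mul_fourier_eq_zero [Fact (0 < T)] {s : Finset ℤ} {c : ℤ → ℂ}
    (h : ∀ t : ℝ, ∑ k ∈ s, c k * fourier k (t : AddCircle T) = 0) : ∀ k ∈ s, c k = 0 := by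
  refine linearIndependent_iff'.1 (linearIndependent_fourier (T := T)) s c ?_
  ext t
  induction t using QuotientAddGroup.induction_on with
  | H t => simpa using h t

end Fourier

noncomputable def dirichletKernel (n : ℕ) (s : ℝ) : ℝ :=
  1 + 2 * ∑ k ∈ Icc 1 n, cos (2 * π * k * s)

theorem ofReal_dirichletKernel (n : ℕ) (s : ℝ) :
    (dirichletKernel n s : ℂ) = ∑ k ∈ Icc (-n : ℤ) n, fourier k (s : AddCircle (1 : ℝ)) := by
  rw [sum_Icc_neg_eq_add_sum_Icc_one, dirichletKernel]
  push_cast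
  simp only [fourier_coe_apply, mul_sum]
  congr 1
  · simp
  refine sum_congr rfl fun k _ => ?_
  rw [Complex.two_cos]
  congr 2 <;> push_cast <;> ring

theorem ofReal_deriv_dirichletKernel (n : ℕ) (s : ℝ) :
    ((deriv (dirichletKernel n) s : ℝ) : ℂ)
      = ∑ k ∈ Icc (-n : ℤ) n, 2 * π * Complex.I * k * fourier k (s : AddCircle (1 : ℝ)) := by
  have hdiff : Differentiable ℝ (dirichletKernel n) := by
    unfold dirichletKernel
    fun_prop
  have hsum : HasDerivAt (fun y : ℝ => ∑ k ∈ Icc (-n : ℤ) n, fourier k (y : AddCircle (1 : ℝ)))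
      (∑ k ∈ Icc (-n : ℤ) n, 2 * π * Complex.I * k * fourier k (s : AddCircle (1 : ℝ))) s := by
    simpa using HasDerivAt.fun_sum fun k _ => hasDerivAt_fourier 1 k s
  exact ((hdiff s).hasDerivAt.ofReal_comp.congr_of_eventuallyEq
    (.of_forall fun y => (ofReal_dirichletKernel n y).symm)).unique hsum

/-- **Injectivity of `Γ_x` for the Dirichlet kernel.** Let `x₁, …, x_N` be pairwise distinct
points of the torus with `N ≤ f_c`, and let `φ` be the Dirichlet kernel of degree `f_c`.
If `u, v ∈ ℝ^N` satisfy `∑ⱼ (uⱼ φ(t − xⱼ) + vⱼ φ'(t − xⱼ)) = 0` for all `t`, then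
`u = v = 0`. -/
theorem gamma_injective_dirichlet (fc : ℕ) (φ : ℝ → ℝ)
    (hφ : ∀ s : ℝ, φ s = 1 + 2 * ∑ k ∈ Finset.Icc 1 fc, Real.cos (2 * Real.pi * k * s))
    (N : ℕ) (hN : N ≤ fc) (x : Fin N → ℝ)
    (hx : Function.Injective (fun i => ((x i : ℝ) : AddCircle (1 : ℝ))))
    (u v : Fin N → ℝ)
    (h : ∀ t : ℝ, ∑ i, (u i * φ (t - x i) + v i * deriv φ (t - x i)) = 0) :
    u = 0 ∧ v = 0 := by
  obtain rfl : φ = dirichletKernel fc := funext hφ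
  set w : Fin N → ℂ := fun i => toCircle (-(x i : AddCircle (1 : ℝ)))
  have hw : Function.Injective w := fun i j hij =>
    hx (neg_injective (injective_toCircle one_ne_zero (Circle.ext hij)))
  have hcoeff (t : ℝ) : ∑ k ∈ Icc (-fc : ℤ) fc,
      (∑ i, ((u i : ℂ) + k * (2 * π * Complex.I * v i)) * w i ^ k)
        * fourier k (t : AddCircle (1 : ℝ)) = 0 := by
    have ht := congrArg (fun r : ℝ => (r : ℂ)) (h t)
    push_cast at ht
    simp only [ofReal_dirichletKernel, ofReal_deriv_dirichletKernel, AddCircle.coe_sub,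
      fourier_sub] at ht
    rw [← ht]
    simp only [sum_mul, mul_sum, ← sum_add_distrib]
    rw [sum_comm]
    refine sum_congr rfl fun i _ => sum_congr rfl fun k _ => ?_
    ring
  obtain ⟨hu, hv⟩ := eq_zero_of_sum_add_mul_zpow_eq_zero hw (fun i => Circle.coe_ne_zero _)
    (by simpa using hN) (eq_zero_of_forall_sum_mul_fourier_eq_zero hcoeff)
  refine ⟨funext fun i => by simpa using congrFun hu i, funext fun i => ?_⟩
  simpa [pi_ne_zero, Complex.I_ne_zero] using congrFun hv i
end
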